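/- For walks with steps E=(1,0), W=(-1,0), NW=(-1,1), SE=(1,-1) confined to the quarter plane, the number of walks of length 2m ending on the x-axis equals the number of walks of length 2m ending on the y-axis, and both equal (2m)!(2m+2)! / (m!·(m+1)!^2·(m+2)!). -/

import Mathlib

/-- Number of quarter-plane walks of length `n` with steps in `S` ending on the `x`-axis. -/
noncomputable def qwalkXAxis (S : Set (ℤ × ℤ)) (n : ℕ) : ℕ :=
  Nat.card {w : Fin (n + 1) → ℤ × ℤ //
    w 0 = (0, 0) ∧
    (∀ i : Fin n, w i.succ - w i.castSucc ∈ S) ∧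
    (∀ i, 0 ≤ (w i).1 ∧ 0 ≤ (w i).2) ∧
    (w (Fin.last n)).2 = 0}

/-- Number of quarter-plane walks of length `n` with steps in `S` ending on the `y`-axis. -/
noncomputable def qwalkYAxis (S : Set (ℤ × ℤ)) (n : ℕ) : ℕ :=
  Nat.card {w : Fin (n + 1) → ℤ × ℤ //
    w 0 = (0, 0) ∧
    (∀ i : Fin n, w i.succ - w i.castSucc ∈ S) ∧
    (∀ i, 0 ≤ (w i).1 ∧ 0 ≤ (w i).2) ∧
    (w (Fin.last n)).1 = 0}


/-!
Encode a step by a pair of bits `(b₁, b₂)`: `b₁` says whether `x + 2y` increases and `b₂` whether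
`x` increases. The map `(x, y) ↦ (x + 2y, x)` sends the four steps onto `{±1}²`, so a walk is a
pair of independent simple walks. If a word has `A` letters with `b₁` and `B` letters with `b₂`
among its first `k`, the walk is at `(2B - k, A - B)`, so staying in the quadrant means
`k ≤ 2B` and `B ≤ A`: a Weyl chamber of type B₂. By the reflection principle, the number of such
words of length `n` with `(A, B) = (k, l)` is an alternating sum of products of binomial
coefficients over the eight-element reflection group; it is proved by checking that both sides
satisfy the same recursion in `n` and that the formula vanishes on the walls. Summed over the
endpoints on either axis the formula telescopes, and both sums equal `C_m C_{m+1}` (Catalan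
numbers), which is the stated quotient of factorials.
-/

open Finset
open scoped Nat

namespace EWNWSE

section PrefixCount

variable {α : Type*} {n : ℕ}

def prefixCount (g : α → Bool) (u : Fin n → α) (k : ℕ) : ℕ :=
  #{i : Fin n | (i : ℕ) < k ∧ g (u i)}

variable (g : α → Bool)

lemma prefixCount_eq_sum (u : Fin n → α) (k : ℕ) :
    prefixCount g u k = ∑ i : Fin n, if (i : ℕ) < k then (g (u i)).toNat else 0 := by
  rw [prefixCount, card_filter]
  refine sum_congr rfl fun i _ => ?_
  by_cases hi : (i : ℕ) < k <;> cases g (u i) <;> simp [hi]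

@[simp]
lemma prefixCount_zero (u : Fin n → α) : prefixCount g u 0 = 0 := by
  simp [prefixCount]

lemma prefixCount_le (u : Fin n → α) (k : ℕ) : prefixCount g u k ≤ n :=
  (card_filter_le _ _).trans (card_univ.trans (Fintype.card_fin n)).le

lemma prefixCount_succ (u : Fin n → α) (i : Fin n) :
    prefixCount g u (i + 1) = prefixCount g u i + (g (u i)).toNat := by
  have hsplit : ∀ j : Fin n, (if (j : ℕ) < i + 1 then (g (u j)).toNat else 0) =
      (if (j : ℕ) < i then (g (u j)).toNat else 0) + if i = j then (g (u j)).toNat else 0 := by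
    intro j
    rcases eq_or_ne i j with rfl | h
    · simp
    · have : (j : ℕ) < i + 1 ↔ (j : ℕ) < i := by
        have := Fin.val_ne_of_ne h.symm
        omega
      simp only [this, h, if_false, add_zero]
  simp only [prefixCount_eq_sum, hsplit, sum_add_distrib, sum_ite_eq, mem_univ, if_true]

lemma prefixCount_snoc (v : Fin n → α) (a : α) (k : ℕ) :
    prefixCount g (Fin.snoc v a : Fin (n + 1) → α) k =
      prefixCount g v k + if n < k then (g a).toNat else 0 := by
  simp [prefixCount_eq_sum, Fin.sum_univ_castSucc]

lemma prefixCount_snoc_of_le (v : Fin n → α) (a : α) {k : ℕ} (hk : k ≤ n) :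
    prefixCount g (Fin.snoc v a : Fin (n + 1) → α) k = prefixCount g v k := by
  simp [prefixCount_snoc, hk]

lemma prefixCount_snoc_last (v : Fin n → α) (a : α) :
    prefixCount g (Fin.snoc v a : Fin (n + 1) → α) (n + 1) = prefixCount g v n + (g a).toNat := by
  rw [prefixCount_snoc, if_pos n.lt_succ_self]
  congr 1
  simp only [prefixCount_eq_sum]
  exact sum_congr rfl fun i _ => by simp [i.isLt, Nat.lt_succ_of_lt i.isLt]

end PrefixCount

lemma card_filter_eq_sum_card_filter_snoc {α : Type*} [Fintype α] {n : ℕ}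
    (P : (Fin (n + 1) → α) → Prop) [DecidablePred P] :
    #{u | P u} = ∑ a, #{v : Fin n → α | P (Fin.snoc v a)} := by
  simp only [card_filter]
  rw [← Fintype.sum_equiv (Fin.snocEquiv fun _ => α) _ _ fun _ => rfl, Fintype.sum_prod_type]
  rfl

section Words

variable {n : ℕ}

def Admissible (u : Fin n → Bool × Bool) : Prop :=
  ∀ k ≤ n, k ≤ 2 * prefixCount Prod.snd u k ∧ prefixCount Prod.snd u k ≤ prefixCount Prod.fst u k

instance : DecidablePred (Admissible (n := n)) :=
  fun _ => Nat.decidableBallLE _ _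

def wordCount (n k l : ℕ) : ℕ :=
  #{u : Fin n → Bool × Bool |
    Admissible u ∧ prefixCount Prod.fst u n = k ∧ prefixCount Prod.snd u n = l}

lemma admissible_snoc_iff (v : Fin n → Bool × Bool) (ε : Bool × Bool) :
    Admissible (Fin.snoc v ε : Fin (n + 1) → Bool × Bool) ↔ Admissible v ∧
      n + 1 ≤ 2 * (prefixCount Prod.snd v n + ε.2.toNat) ∧
      prefixCount Prod.snd v n + ε.2.toNat ≤ prefixCount Prod.fst v n + ε.1.toNat := by
  simp only [Admissible, ← prefixCount_snoc_last]
  constructor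
  · intro h
    refine ⟨fun k hk => ?_, h (n + 1) le_rfl⟩
    simpa only [prefixCount_snoc_of_le _ _ _ hk] using h k (hk.trans n.le_succ)
  · rintro ⟨hv, hlast⟩ k hk
    rcases hk.lt_or_eq with hk | rfl
    · have hk := Nat.le_of_lt_succ hk
      simpa only [prefixCount_snoc_of_le _ _ _ hk] using hv k hk
    · exact hlast

lemma wordCount_zero (k l : ℕ) : wordCount 0 k l = if k = 0 ∧ l = 0 then 1 else 0 := by
  have hadm (u : Fin 0 → Bool × Bool) : Admissible u := fun k hk => by
    obtain rfl := Nat.le_zero.mp hk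
    simp
  simp only [wordCount, hadm, prefixCount_zero, eq_comm (a := 0), true_and]
  by_cases h : k = 0 ∧ l = 0 <;> simp [h]

lemma wordCount_eq_zero {k l : ℕ} (h : ¬(n ≤ 2 * l ∧ l ≤ k)) : wordCount n k l = 0 := by
  rw [wordCount, card_eq_zero, filter_eq_empty_iff]
  rintro u - ⟨hu, rfl, rfl⟩
  exact h (hu n le_rfl)

lemma wordCount_succ {k l : ℕ} (hl : n + 1 ≤ 2 * l) (hk : l ≤ k) :
    wordCount (n + 1) k l =
      wordCount n (k - 1) (l - 1) + wordCount n (k - 1) l + wordCount n k (l - 1) +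
        wordCount n k l := by
  have hfiber : ∀ ε : Bool × Bool,
      #{v : Fin n → Bool × Bool | Admissible (Fin.snoc v ε : Fin (n + 1) → Bool × Bool) ∧
          prefixCount Prod.fst (Fin.snoc v ε : Fin (n + 1) → Bool × Bool) (n + 1) = k ∧
          prefixCount Prod.snd (Fin.snoc v ε : Fin (n + 1) → Bool × Bool) (n + 1) = l} =
        wordCount n (k - ε.1.toNat) (l - ε.2.toNat) := by
    intro ε
    have h₁ := Bool.toNat_le ε.1
    have h₂ := Bool.toNat_le ε.2
    refine congr_arg card (filter_congr fun v _ => ?_)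
    rw [admissible_snoc_iff, prefixCount_snoc_last, prefixCount_snoc_last, and_assoc]
    exact and_congr_right fun _ => by omega
  rw [wordCount, card_filter_eq_sum_card_filter_snoc, Fintype.sum_prod_type]
  simp only [hfiber, Fintype.sum_bool, Bool.toNat_true, Bool.toNat_false, Nat.sub_zero]
  ring

end Words

section Encoding

variable {n : ℕ}

abbrev steps : Set (ℤ × ℤ) := {(1, 0), (-1, 0), (-1, 1), (1, -1)}

def letterStep : Bool × Bool → ℤ × ℤ
  | (true, true) => (1, 0)
  | (false, false) => (-1, 0)
  | (true, false) => (-1, 1)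
  | (false, true) => (1, -1)

def stepLetter (d : ℤ × ℤ) : Bool × Bool :=
  (decide (d.1 + 2 * d.2 = 1), decide (d.1 = 1))

lemma letterStep_mem (ε : Bool × Bool) : letterStep ε ∈ steps := by
  rcases ε with ⟨_ | _, _ | _⟩ <;> simp [letterStep]

lemma stepLetter_letterStep (ε : Bool × Bool) : stepLetter (letterStep ε) = ε := by
  rcases ε with ⟨_ | _, _ | _⟩ <;> rfl

lemma letterStep_stepLetter {d : ℤ × ℤ} (hd : d ∈ steps) : letterStep (stepLetter d) = d := by
  rcases hd with rfl | rfl | rfl | rfl <;> rfl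

def wordWalk (u : Fin n → Bool × Bool) (i : Fin (n + 1)) : ℤ × ℤ :=
  (2 * prefixCount Prod.snd u i - i, prefixCount Prod.fst u i - prefixCount Prod.snd u i)

lemma wordWalk_zero (u : Fin n → Bool × Bool) : wordWalk u 0 = (0, 0) := by
  simp [wordWalk]

lemma wordWalk_succ (u : Fin n → Bool × Bool) (i : Fin n) :
    wordWalk u i.succ = wordWalk u i.castSucc + letterStep (u i) := by
  simp only [wordWalk, Fin.val_succ, Fin.val_castSucc, prefixCount_succ]
  rcases u i with ⟨_ | _, _ | _⟩ <;>
    simp only [letterStep, Bool.toNat_true, Bool.toNat_false, Prod.mk_add_mk, Prod.mk.injEq] <;>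
    constructor <;> push_cast <;> ring

lemma admissible_iff_wordWalk (u : Fin n → Bool × Bool) :
    Admissible u ↔ ∀ i, 0 ≤ (wordWalk u i).1 ∧ 0 ≤ (wordWalk u i).2 := by
  simp only [Admissible, wordWalk, Fin.forall_iff, Nat.lt_succ_iff]
  refine forall₂_congr fun k _ => ?_
  omega

def wordOfWalk (w : Fin (n + 1) → ℤ × ℤ) (i : Fin n) : Bool × Bool :=
  stepLetter (w i.succ - w i.castSucc)

lemma wordOfWalk_wordWalk (u : Fin n → Bool × Bool) : wordOfWalk (wordWalk u) = u := by
  funext i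
  rw [wordOfWalk, wordWalk_succ, add_sub_cancel_left, stepLetter_letterStep]

lemma wordWalk_wordOfWalk {w : Fin (n + 1) → ℤ × ℤ} (h₀ : w 0 = (0, 0))
    (hw : ∀ i : Fin n, w i.succ - w i.castSucc ∈ steps) : wordWalk (wordOfWalk w) = w := by
  funext i
  induction i using Fin.induction with
  | zero => rw [wordWalk_zero, h₀]
  | succ i ih => rw [wordWalk_succ, ih, wordOfWalk, letterStep_stepLetter (hw i), add_sub_cancel]

lemma card_walks_eq_card_admissible (E : ℤ × ℤ → Prop) [DecidablePred E] (n : ℕ) :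
    Nat.card {w : Fin (n + 1) → ℤ × ℤ //
      w 0 = (0, 0) ∧
      (∀ i : Fin n, w i.succ - w i.castSucc ∈ steps) ∧
      (∀ i, 0 ≤ (w i).1 ∧ 0 ≤ (w i).2) ∧
      E (w (Fin.last n))} =
    #{u : Fin n → Bool × Bool | Admissible u ∧ E (wordWalk u (Fin.last n))} := by
  rw [← Fintype.card_subtype, ← Nat.card_eq_fintype_card]
  refine Nat.card_congr
    { toFun := fun w => ⟨wordOfWalk w.1, ?_⟩
      invFun := fun u => ⟨wordWalk u.1, wordWalk_zero _, fun i => ?_, ?_, ?_⟩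
      left_inv := fun w => Subtype.ext (wordWalk_wordOfWalk w.2.1 w.2.2.1)
      right_inv := fun u => Subtype.ext (wordOfWalk_wordWalk u.1) }
  · rw [admissible_iff_wordWalk, wordWalk_wordOfWalk w.2.1 w.2.2.1]
    exact w.2.2.2
  · rw [wordWalk_succ, add_sub_cancel_left]
    exact letterStep_mem _
  · exact (admissible_iff_wordWalk _).1 u.2.1
  · exact u.2.2

lemma card_admissible_eq_sum (f : ℕ → ℕ) :
    #{u : Fin n → Bool × Bool |
        Admissible u ∧ prefixCount Prod.snd u n = f (prefixCount Prod.fst u n)} =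
      ∑ k ∈ range (n + 1), wordCount n k (f k) := by
  rw [card_eq_sum_card_fiberwise fun u _ => mem_range_succ_iff.2 (prefixCount_le _ u n)]
  refine sum_congr rfl fun k _ => congr_arg card ?_
  rw [filter_filter]
  refine filter_congr fun u _ => ?_
  constructor
  · rintro ⟨⟨hu, hl⟩, rfl⟩
    exact ⟨hu, rfl, hl⟩
  · rintro ⟨hu, rfl, hl⟩
    exact ⟨⟨hu, hl⟩, rfl⟩

lemma qwalkXAxis_eq_sum (n : ℕ) :
    qwalkXAxis steps n = ∑ k ∈ range (n + 1), wordCount n k k := by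
  refine (card_walks_eq_card_admissible (fun p => p.2 = 0) n).trans
    (Eq.trans ?_ (card_admissible_eq_sum id))
  refine congr_arg card (filter_congr fun u _ => and_congr_right fun _ => ?_)
  simp only [wordWalk, Fin.val_last, id]
  omega

lemma qwalkYAxis_eq_sum (m : ℕ) :
    qwalkYAxis steps (2 * m) = ∑ k ∈ range (2 * m + 1), wordCount (2 * m) k m := by
  refine (card_walks_eq_card_admissible (fun p => p.1 = 0) (2 * m)).trans
    (Eq.trans ?_ (card_admissible_eq_sum fun _ => m))
  refine congr_arg card (filter_congr fun u _ => and_congr_right fun _ => ?_)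
  simp only [wordWalk, Fin.val_last]
  omega

end Encoding

section Binomial

def binomZ (n : ℕ) (j : ℤ) : ℤ :=
  if 0 ≤ j then (n.choose j.toNat : ℤ) else 0

@[simp]
lemma binomZ_natCast (n j : ℕ) : binomZ n j = n.choose j := by
  simp [binomZ]

lemma binomZ_of_neg {n : ℕ} {j : ℤ} (hj : j < 0) : binomZ n j = 0 :=
  if_neg hj.not_ge

lemma binomZ_of_lt {n : ℕ} {j : ℤ} (hj : n < j) : binomZ n j = 0 := by
  lift j to ℕ using by omega
  rw [binomZ_natCast, Nat.choose_eq_zero_of_lt (by omega), Nat.cast_zero]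

lemma binomZ_zero_left (j : ℤ) : binomZ 0 j = if j = 0 then 1 else 0 := by
  rcases lt_trichotomy j 0 with hj | rfl | hj
  · rw [binomZ_of_neg hj, if_neg hj.ne]
  · simp [binomZ]
  · rw [binomZ_of_lt (by exact_mod_cast hj), if_neg hj.ne']

lemma binomZ_succ (n : ℕ) (j : ℤ) : binomZ (n + 1) j = binomZ n j + binomZ n (j - 1) := by
  rcases lt_trichotomy j 0 with hj | rfl | hj
  · rw [binomZ_of_neg hj, binomZ_of_neg hj, binomZ_of_neg (by omega), add_zero]
  · simp [binomZ]
  · lift j - 1 to ℕ using by omega with i hi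
    rw [show j = (i + 1 : ℕ) by omega]
    rw [binomZ_natCast, binomZ_natCast, binomZ_natCast, Nat.choose_succ_succ', Nat.cast_add,
      add_comm]

lemma binomZ_symm (n : ℕ) (j : ℤ) : binomZ n (n - j) = binomZ n j := by
  rcases lt_or_ge j 0 with hj | hj
  · rw [binomZ_of_neg hj, binomZ_of_lt (by omega)]
  rcases lt_or_ge (n : ℤ) j with hn | hn
  · rw [binomZ_of_neg (by omega), binomZ_of_lt hn]
  lift j to ℕ using hj
  rw [show (n : ℤ) - j = (n - j : ℕ) by omega, binomZ_natCast, binomZ_natCast,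
    Nat.choose_symm (by omega)]

lemma binomZ_succ_mul (n : ℕ) (j : ℤ) : binomZ n (j + 1) * (j + 1) = binomZ n j * (n - j) := by
  rcases lt_or_ge j 0 with hj | hj
  · rcases (by omega : j = -1 ∨ j + 1 < 0) with rfl | hj'
    · simp [binomZ_of_neg hj]
    · rw [binomZ_of_neg hj, binomZ_of_neg hj', zero_mul, zero_mul]
  lift j to ℕ using hj
  rcases le_or_gt j n with hjn | hjn
  · have h := Nat.choose_succ_right_eq n j
    rw [← Nat.cast_succ, binomZ_natCast, binomZ_natCast, ← Nat.cast_sub hjn]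
    exact_mod_cast h
  · rw [binomZ_of_lt (by omega), binomZ_of_lt (by omega), zero_mul, zero_mul]

end Binomial

section ReflectionSum

variable (a : ℤ → ℤ)

/-- For `a = binomZ n` this is the reflection-principle count: `a k * a l` counts all words of
length `n` with endpoint `(k, l)`, and the eight terms are its signed images under the group
generated by the reflections in the walls `l = k + 1` and `2 * l + 1 = n` (the latter written
through `binomZ n (n - j) = binomZ n j`). -/
def reflectionSum (k l : ℤ) : ℤ :=
  (a k - a (k + 3)) * (a l - a (l + 1)) - (a (l - 1) - a (l + 2)) * (a (k + 1) - a (k + 2))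

lemma reflectionSum_sub_one_self (l : ℤ) : reflectionSum a (l - 1) l = 0 := by
  simp only [reflectionSum, sub_add_cancel, show l - 1 + 3 = l + 2 by ring,
    show l - 1 + 2 = l + 1 by ring]
  ring

lemma reflectionSum_of_symm {c : ℤ} (ha : ∀ j, a (c - j) = a j) (k : ℤ) {l : ℤ}
    (hl : 2 * l + 1 = c) : reflectionSum a k l = 0 := by
  have h₁ : a (l + 1) = a l := by rw [← ha l]; congr 1; omega
  have h₂ : a (l + 2) = a (l - 1) := by rw [← ha (l - 1)]; congr 1; omega
  simp only [reflectionSum, h₁, h₂, sub_self, mul_zero, zero_mul]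

lemma reflectionSum_of_pascal {b : ℤ → ℤ} (hb : ∀ j, b j = a j + a (j - 1)) (k l : ℤ) :
    reflectionSum b k l = reflectionSum a (k - 1) (l - 1) + reflectionSum a (k - 1) l +
      reflectionSum a k (l - 1) + reflectionSum a k l := by
  simp only [reflectionSum, hb]
  ring_nf

def diagAntidiff (x : ℤ) : ℤ :=
  a x ^ 2 + a (x + 1) ^ 2 - a x * a (x + 1) + a (x - 1) * a (x + 2) - a (x - 1) * a (x + 1) -
    a x * a (x + 2)

def rowAntidiff (l x : ℤ) : ℤ :=
  (a x + a (x + 1) + a (x + 2)) * (a l - a (l + 1)) - (a (l - 1) - a (l + 2)) * a (x + 1)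

lemma reflectionSum_self (x : ℤ) :
    reflectionSum a x x = diagAntidiff a x - diagAntidiff a (x + 1) := by
  simp only [reflectionSum, diagAntidiff]
  ring_nf

lemma reflectionSum_eq_rowAntidiff_sub (x l : ℤ) :
    reflectionSum a x l = rowAntidiff a l x - rowAntidiff a l (x + 1) := by
  simp only [reflectionSum, rowAntidiff]
  ring_nf

end ReflectionSum

lemma reflectionSum_binomZ_zero (k l : ℕ) :
    reflectionSum (binomZ 0) k l = if k = 0 ∧ l = 0 then 1 else 0 := by
  simp only [reflectionSum, binomZ_zero_left]
  split_ifs <;> omega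

/-- The induction runs over the chamber together with its walls `2 * l + 1 = n` and `l = k + 1`,
where both sides vanish. -/
theorem wordCount_eq_reflectionSum (n : ℕ) :
    ∀ k l : ℕ, n ≤ 2 * l + 1 → l ≤ k + 1 →
      (wordCount n k l : ℤ) = reflectionSum (binomZ n) k l := by
  induction n with
  | zero =>
    intro k l _ _
    rw [wordCount_zero, reflectionSum_binomZ_zero, Nat.cast_ite, Nat.cast_one, Nat.cast_zero]
  | succ n ih =>
    intro k l hl hk
    by_cases hc : n + 1 ≤ 2 * l ∧ l ≤ k
    · rw [wordCount_succ hc.1 hc.2, reflectionSum_of_pascal (binomZ n) (binomZ_succ n)]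
      push_cast
      rw [ih (k - 1) (l - 1) (by omega) (by omega), ih (k - 1) l (by omega) (by omega),
        ih k (l - 1) (by omega) (by omega), ih k l (by omega) (by omega),
        Nat.cast_sub (by omega : 1 ≤ k), Nat.cast_sub (by omega : 1 ≤ l), Nat.cast_one]
    · rw [wordCount_eq_zero hc, Nat.cast_zero]
      rcases (by omega : 2 * l = n ∨ l = k + 1) with hwall | hwall
      · exact (reflectionSum_of_symm _ (binomZ_symm (n + 1)) _ (by push_cast; omega)).symm
      · rw [show (k : ℤ) = l - 1 by omega, reflectionSum_sub_one_self]

lemma sum_Ico_eq_sub_of_antidiff {f : ℕ → ℤ} {F : ℤ → ℤ} (hf : ∀ k : ℕ, f k = F k - F (k + 1))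
    {p q : ℕ} (hpq : p ≤ q) : ∑ k ∈ Ico p q, f k = F p - F q := by
  have := sum_Ico_sub (fun k : ℕ => F k) hpq
  simp only [Nat.cast_add, Nat.cast_one] at this
  rw [← neg_sub, ← this, ← sum_neg_distrib]
  exact sum_congr rfl fun k _ => by rw [hf, neg_sub]

lemma sum_wordCount_eq_sum_Ico (m : ℕ) (f : ℕ → ℕ) (hf : ∀ k, m ≤ k → m ≤ f k ∧ f k ≤ k) :
    (∑ k ∈ range (2 * m + 1), wordCount (2 * m) k (f k) : ℤ) =
      ∑ k ∈ Ico m (2 * m + 1), reflectionSum (binomZ (2 * m)) k (f k) := by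
  rw [range_eq_Ico, ← sum_Ico_consecutive _ (Nat.zero_le m) (by omega : m ≤ 2 * m + 1),
    sum_eq_zero fun k hk => ?_, zero_add]
  · refine sum_congr rfl fun k hk => ?_
    have := hf k (mem_Ico.1 hk).1
    exact wordCount_eq_reflectionSum _ _ _ (by omega) (by omega)
  · rw [wordCount_eq_zero (by have := (mem_Ico.1 hk).2; omega), Nat.cast_zero]

lemma binomZ_of_two_mul_lt {m : ℕ} {j : ℤ} (hj : 2 * m < j) : binomZ (2 * m) j = 0 :=
  binomZ_of_lt (by push_cast; exact hj)

lemma sum_Ico_reflectionSum_diag (m : ℕ) :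
    ∑ k ∈ Ico m (2 * m + 1), reflectionSum (binomZ (2 * m)) k k =
      diagAntidiff (binomZ (2 * m)) m := by
  rw [sum_Ico_eq_sub_of_antidiff (fun k => reflectionSum_self _ k) (by omega)]
  simp only [diagAntidiff, Nat.cast_add, Nat.cast_mul, Nat.cast_ofNat, Nat.cast_one,
    binomZ_of_two_mul_lt (by omega : (2 * m : ℤ) < 2 * m + 1),
    binomZ_of_two_mul_lt (by omega : (2 * m : ℤ) < 2 * m + 1 + 1),
    binomZ_of_two_mul_lt (by omega : (2 * m : ℤ) < 2 * m + 1 + 2)]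
  ring

lemma sum_Ico_reflectionSum_row (m : ℕ) :
    ∑ k ∈ Ico m (2 * m + 1), reflectionSum (binomZ (2 * m)) k m =
      rowAntidiff (binomZ (2 * m)) m m := by
  rw [sum_Ico_eq_sub_of_antidiff (fun k => reflectionSum_eq_rowAntidiff_sub _ k m) (by omega)]
  simp only [rowAntidiff, Nat.cast_add, Nat.cast_mul, Nat.cast_ofNat, Nat.cast_one,
    binomZ_of_two_mul_lt (by omega : (2 * m : ℤ) < 2 * m + 1),
    binomZ_of_two_mul_lt (by omega : (2 * m : ℤ) < 2 * m + 1 + 1),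
    binomZ_of_two_mul_lt (by omega : (2 * m : ℤ) < 2 * m + 1 + 2)]
  ring

section CentralBinomial

variable (m : ℕ)

lemma binomZ_central_sub_one : binomZ (2 * m) (m - 1) = binomZ (2 * m) (m + 1) := by
  rw [← binomZ_symm (2 * m) (m + 1)]
  congr 1
  push_cast
  ring

lemma binomZ_central_succ_mul : binomZ (2 * m) (m + 1) * (m + 1) = binomZ (2 * m) m * m := by
  have h := binomZ_succ_mul (2 * m) m
  push_cast at h
  linear_combination h

lemma binomZ_central_succ_succ_mul :
    binomZ (2 * m) (m + 2) * (m + 2) = binomZ (2 * m) (m + 1) * (m - 1) := by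
  have h := binomZ_succ_mul (2 * m) (m + 1)
  rw [show (m : ℤ) + 1 + 1 = m + 2 by ring] at h
  push_cast at h
  linear_combination h

lemma catalan_mul_factorial_mul_factorial : catalan m * m ! * (m + 1)! = (2 * m)! :=
  calc catalan m * m ! * (m + 1)! = m.centralBinom * m ! * m ! := by
        rw [Nat.factorial_succ, ← succ_mul_catalan_eq_centralBinom]
        ring
    _ = (2 * m)! := by
        rw [Nat.centralBinom_eq_two_mul_choose, two_mul, Nat.add_choose_mul_factorial_mul_factorial]

lemma binomZ_central_sub_succ : binomZ (2 * m) m - binomZ (2 * m) (m + 1) = catalan m := by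
  have hcat : ((m + 1) * catalan m : ℤ) = binomZ (2 * m) m := by
    rw [binomZ_natCast, ← Nat.centralBinom_eq_two_mul_choose, ← succ_mul_catalan_eq_centralBinom]
    push_cast
    ring
  refine mul_left_cancel₀ (by positivity : (m + 1 : ℤ) ≠ 0) ?_
  linear_combination -binomZ_central_succ_mul m - hcat

lemma binomZ_central_sub_succ_succ :
    binomZ (2 * m) m - binomZ (2 * m) (m + 2) = catalan (m + 1) := by
  have hcat : ((m + 1) * (m + 2) * catalan (m + 1) : ℤ) = 2 * (2 * m + 1) * binomZ (2 * m) m := by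
    rw [binomZ_natCast, ← Nat.centralBinom_eq_two_mul_choose]
    have := Nat.succ_mul_centralBinom_succ m
    rw [← succ_mul_catalan_eq_centralBinom] at this
    exact_mod_cast (by linarith [this] :
      (m + 1) * (m + 2) * catalan (m + 1) = 2 * (2 * m + 1) * m.centralBinom)
  refine mul_left_cancel₀ (by positivity : ((m + 1) * (m + 2) : ℤ) ≠ 0) ?_
  linear_combination
    -(m + 1) * binomZ_central_succ_succ_mul m - (m - 1) * binomZ_central_succ_mul m - hcat

lemma diagAntidiff_binomZ_central :
    diagAntidiff (binomZ (2 * m)) m = catalan m * catalan (m + 1) := by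
  rw [diagAntidiff, binomZ_central_sub_one]
  linear_combination (binomZ (2 * m) m - binomZ (2 * m) (m + 2)) * binomZ_central_sub_succ m +
    (catalan m : ℤ) * binomZ_central_sub_succ_succ m

lemma rowAntidiff_binomZ_central :
    rowAntidiff (binomZ (2 * m)) m m = diagAntidiff (binomZ (2 * m)) m := by
  rw [rowAntidiff, diagAntidiff, binomZ_central_sub_one]
  linear_combination (binomZ (2 * m) (m + 2) - binomZ (2 * m) (m + 1)) * binomZ_central_succ_mul m +
    (binomZ (2 * m) m - binomZ (2 * m) (m + 1)) * binomZ_central_succ_succ_mul m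

end CentralBinomial

lemma qwalkXAxis_eq_catalan (m : ℕ) :
    qwalkXAxis steps (2 * m) = catalan m * catalan (m + 1) := by
  have h : (qwalkXAxis steps (2 * m) : ℤ) = diagAntidiff (binomZ (2 * m)) m := by
    rw [qwalkXAxis_eq_sum, Nat.cast_sum, ← sum_Ico_reflectionSum_diag]
    exact sum_wordCount_eq_sum_Ico m id fun _ hk => ⟨hk, le_rfl⟩
  exact_mod_cast h.trans (diagAntidiff_binomZ_central m)

lemma qwalkYAxis_eq_catalan (m : ℕ) :
    qwalkYAxis steps (2 * m) = catalan m * catalan (m + 1) := by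
  have h : (qwalkYAxis steps (2 * m) : ℤ) = rowAntidiff (binomZ (2 * m)) m m := by
    rw [qwalkYAxis_eq_sum, Nat.cast_sum, ← sum_Ico_reflectionSum_row]
    exact sum_wordCount_eq_sum_Ico m (fun _ => m) fun _ hk => ⟨le_rfl, hk⟩
  rw [rowAntidiff_binomZ_central, diagAntidiff_binomZ_central] at h
  exact_mod_cast h

end EWNWSE

theorem walks_EWNWSE_axes (m : ℕ) :
    qwalkXAxis {(1, 0), (-1, 0), (-1, 1), (1, -1)} (2 * m) =
      qwalkYAxis {(1, 0), (-1, 0), (-1, 1), (1, -1)} (2 * m) ∧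
    qwalkXAxis {(1, 0), (-1, 0), (-1, 1), (1, -1)} (2 * m) *
      (Nat.factorial m * Nat.factorial (m + 1) ^ 2 * Nat.factorial (m + 2)) =
    Nat.factorial (2 * m) * Nat.factorial (2 * m + 2) := by
  rw [EWNWSE.qwalkXAxis_eq_catalan, EWNWSE.qwalkYAxis_eq_catalan]
  refine ⟨rfl, ?_⟩
  calc catalan m * catalan (m + 1) * (m ! * (m + 1)! ^ 2 * (m + 2)!)
      = (catalan m * m ! * (m + 1)!) * (catalan (m + 1) * (m + 1)! * (m + 2)!) := by ring
    _ = (2 * m)! * (2 * m + 2)! := by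
      rw [EWNWSE.catalan_mul_factorial_mul_factorial, EWNWSE.catalan_mul_factorial_mul_factorial,
        mul_add_one]
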